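/- arXiv:2009.00991 — 4 statements merged into one kernel-verified Lean document; each statement's English description precedes it below -/
import Mathlib

section
/- Suppose the sequence (v^n)_{n≥0} solves the discrete wave scheme with source (r^n)_{n≥1}. Then for every n ≥ 1 the one-step discrete energy identity holds: E^{n+1/2}(v) − E^{n−1/2}(v) = τ · ⟨r^n, (v^{n+1} − v^{n−1})/(2τ)⟩. -/
open RealInnerProductSpace

/-!
By polarization, the correction term `-(τ²/8) a(δ, δ)`, `δ = (v^{n+1} - v^n)/τ`, turns the
midpoint term of the energy into a product of consecutive iterates:
`E^{n+1/2}(v) = ½‖π δ‖² + ½ a(v^{n+1}, v^n)`.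
In the difference `E^{n+1/2} - E^{n-1/2}` the kinetic parts factor as a difference of squares and
the potential parts combine by symmetry of `a`, leaving half of the left-hand side of the scheme
tested with `w = v^{n+1} - v^{n-1} ∈ V`.
-/

/-- The discrete energy `E^{n+1/2}(v)` of the leapfrog scheme:
`E^{n+1/2}(v) = (1/2)‖π((v^{n+1}−v^n)/τ)‖² − (τ²/8) a((v^{n+1}−v^n)/τ, (v^{n+1}−v^n)/τ)
  + (1/2) a((v^{n+1}+v^n)/2, (v^{n+1}+v^n)/2)`. -/
noncomputable def discE {H : Type*} [NormedAddCommGroup H] [InnerProductSpace ℝ H]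
    (W : Submodule ℝ H) [Submodule.HasOrthogonalProjection W]
    (a : H →ₗ[ℝ] H →ₗ[ℝ] ℝ) (τ : ℝ) (v : ℕ → H) (n : ℕ) : ℝ :=
  (1 / 2) * ‖(Submodule.orthogonalProjectionOnto W (τ⁻¹ • (v (n + 1) - v n)) : H)‖ ^ 2
    - (τ ^ 2 / 8) * a (τ⁻¹ • (v (n + 1) - v n)) (τ⁻¹ • (v (n + 1) - v n))
    + (1 / 2) * a ((2 : ℝ)⁻¹ • (v (n + 1) + v n)) ((2 : ℝ)⁻¹ • (v (n + 1) + v n))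

section

variable {H : Type*} [NormedAddCommGroup H] [InnerProductSpace ℝ H]

theorem real_inner_sub_add_eq_norm_sq_sub_norm_sq (x y : H) :
    ⟪x - y, x + y⟫ = ‖x‖ ^ 2 - ‖y‖ ^ 2 := by
  rw [inner_sub_left, inner_add_right, inner_add_right, real_inner_self_eq_norm_sq,
    real_inner_self_eq_norm_sq, real_inner_comm x y]
  ring

theorem LinearMap.apply_add_add_sub_apply_sub_sub (a : H →ₗ[ℝ] H →ₗ[ℝ] ℝ)
    (hsymm : ∀ u w : H, a u w = a w u) (x y : H) :
    a (x + y) (x + y) - a (x - y) (x - y) = 4 * a x y := by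
  simp only [map_add, map_sub, LinearMap.add_apply, LinearMap.sub_apply, hsymm y x]
  ring

variable (W : Submodule ℝ H) [W.HasOrthogonalProjection] {a : H →ₗ[ℝ] H →ₗ[ℝ] ℝ}
  (hsymm : ∀ u w : H, a u w = a w u) {τ : ℝ} (hτ : τ ≠ 0) (v : ℕ → H)
include hsymm hτ

theorem discE_eq_half_norm_sq_add_half_apply (n : ℕ) :
    discE W a τ v n = (1 / 2) * ‖(W.orthogonalProjectionOnto (τ⁻¹ • (v (n + 1) - v n)) : H)‖ ^ 2
      + (1 / 2) * a (v (n + 1)) (v n) := by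
  have hpolar := a.apply_add_add_sub_apply_sub_sub hsymm (v (n + 1)) (v n)
  have hscale : ∀ A : ℝ, τ ^ 2 / 8 * (τ⁻¹ * (τ⁻¹ * A)) = A / 8 := fun A => by field_simp
  simp only [discE, map_smul, LinearMap.smul_apply, smul_eq_mul, hscale]
  linear_combination (1 / 8 : ℝ) * hpolar

omit hsymm in
theorem norm_sq_sub_norm_sq_orthogonalProjection_smul_sub (x y z : H) :
    ‖(W.orthogonalProjectionOnto (τ⁻¹ • (x - y)) : H)‖ ^ 2
      - ‖(W.orthogonalProjectionOnto (τ⁻¹ • (y - z)) : H)‖ ^ 2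
      = ⟪(W.orthogonalProjectionOnto ((τ ^ 2)⁻¹ • (x - 2 • y + z)) : H),
          (W.orthogonalProjectionOnto (x - z) : H)⟫ := by
  have hsub : τ⁻¹ • (x - y) - τ⁻¹ • (y - z) = τ • (τ ^ 2)⁻¹ • (x - 2 • y + z) := by
    rw [smul_smul, ← inv_pow, sq, ← mul_assoc, mul_inv_cancel₀ hτ, one_mul]
    module
  have hadd : τ⁻¹ • (x - y) + τ⁻¹ • (y - z) = τ⁻¹ • (x - z) := by module
  rw [← real_inner_sub_add_eq_norm_sq_sub_norm_sq, ← Submodule.coe_sub, ← map_sub,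
    ← Submodule.coe_add, ← map_add, hsub, hadd, map_smul _ τ, Submodule.coe_smul,
    real_inner_smul_left, map_smul _ τ⁻¹, Submodule.coe_smul, real_inner_smul_right,
    ← mul_assoc, mul_inv_cancel₀ hτ, one_mul]

theorem discE_sub_discE_pred {n : ℕ} (hn : 1 ≤ n) :
    discE W a τ v n - discE W a τ v (n - 1)
      = (1 / 2) *
        (⟪(W.orthogonalProjectionOnto ((τ ^ 2)⁻¹ • (v (n + 1) - 2 • v n + v (n - 1))) : H),
            (W.orthogonalProjectionOnto (v (n + 1) - v (n - 1)) : H)⟫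
          + a (v n) (v (n + 1) - v (n - 1))) := by
  obtain ⟨m, rfl⟩ := Nat.exists_eq_add_of_le' hn
  rw [Nat.add_sub_cancel, discE_eq_half_norm_sq_add_half_apply W hsymm hτ,
    discE_eq_half_norm_sq_add_half_apply W hsymm hτ, map_sub (a (v (m + 1))),
    ← norm_sq_sub_norm_sq_orthogonalProjection_smul_sub W hτ]
  linear_combination (1 / 2 : ℝ) * hsymm (v (m + 1 + 1)) (v (m + 1))

end

/-- One-step discrete energy identity:
`E^{n+1/2}(v) − E^{n−1/2}(v) = τ ⟨r^n, (v^{n+1} − v^{n−1})/(2τ)⟩`. -/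
theorem one_step_energy_identity
    {H : Type*} [NormedAddCommGroup H] [InnerProductSpace ℝ H]
    (W V : Submodule ℝ H) [Submodule.HasOrthogonalProjection W]
    (a : H →ₗ[ℝ] H →ₗ[ℝ] ℝ) (hsymm : ∀ u w : H, a u w = a w u)
    (τ : ℝ) (hτ : 0 < τ)
    (v r : ℕ → H) (hvV : ∀ n, v n ∈ V)
    (hscheme : ∀ n, 1 ≤ n → ∀ w ∈ V,
      ⟪(Submodule.orthogonalProjectionOnto W ((τ ^ 2)⁻¹ • (v (n + 1) - 2 • v n + v (n - 1))) : H),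
        (Submodule.orthogonalProjectionOnto W w : H)⟫ + a (v n) w = ⟪r n, w⟫)
    (n : ℕ) (hn : 1 ≤ n) :
    discE W a τ v n - discE W a τ v (n - 1)
      = τ * ⟪r n, (2 * τ)⁻¹ • (v (n + 1) - v (n - 1))⟫ := by
  rw [discE_sub_discE_pred W hsymm hτ.ne' v hn,
    hscheme n hn _ (sub_mem (hvV (n + 1)) (hvV (n - 1))), real_inner_smul_right]
  field_simp
end

section
/- Suppose there exists C_a ≥ 0 such that a(G g − P(G g), G g − P(G g)) ≤ C_a² ‖g‖² for all g ∈ L. Then for every v ∈ V_h one has ‖v − P v‖ ≤ C_a · √(a(v − P v, v − P v)); that is, the L²-norm of the elliptic-projection error of any v ∈ V_h is controlled by C_a times its energy seminorm. -/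
open RealInnerProductSpace

/-- The `L²` norm of the elliptic-projection error of any `v ∈ V_h` is controlled by
`C_a` times its energy seminorm: given the energy-norm convergence estimate
`a(G g − P(G g), G g − P(G g)) ≤ C_a² ‖g‖²` for all `g`, one has
`‖v − P v‖ ≤ C_a √(a(v − P v, v − P v))` for every `v ∈ V_h`. -/
theorem elliptic_projection_L2_by_energy
    {L : Type*} [NormedAddCommGroup L] [InnerProductSpace ℝ L]
    (Vh VH : Submodule ℝ L) (hVHh : VH ≤ Vh)
    (a : L →ₗ[ℝ] L →ₗ[ℝ] ℝ) (hsymm : ∀ u w : L, a u w = a w u)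
    (hpos : ∀ w ∈ Vh, 0 ≤ a w w)
    (G : L → L) (hGmem : ∀ g : L, G g ∈ Vh)
    (hG : ∀ g : L, ∀ w ∈ Vh, a (G g) w = ⟪g, w⟫)
    (P : L → L) (hPmem : ∀ v ∈ Vh, P v ∈ VH)
    (hP : ∀ v ∈ Vh, ∀ w ∈ VH, a (P v) w = a v w)
    (Ca : ℝ) (hCa : 0 ≤ Ca)
    (hconv : ∀ g : L, a (G g - P (G g)) (G g - P (G g)) ≤ Ca ^ 2 * ‖g‖ ^ 2) :
    ∀ v ∈ Vh, ‖v - P v‖ ≤ Ca * Real.sqrt (a (v - P v) (v - P v)) := by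
  intro v hv
  set e := v - P v with he_def
  have heVh : e ∈ Vh := Vh.sub_mem hv (hVHh (hPmem v hv))
  set d := G e - P (G e) with hd_def
  have hdVh : d ∈ Vh := Vh.sub_mem (hGmem e) (hVHh (hPmem (G e) (hGmem e)))
  -- Galerkin orthogonality: a e w = 0 for w ∈ VH
  have horth : ∀ w ∈ VH, a e w = 0 := by
    intro w hw
    have h := hP v hv w hw
    simp only [he_def, map_sub, LinearMap.sub_apply]
    rw [h]; ring
  -- duality identity: ‖e‖² = a e d
  have h1 : ‖e‖ ^ 2 = a e d := by
    have h2 : (⟪e, e⟫ : ℝ) = a (G e) e := (hG e e heVh).symm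
    have h3 : a e d = a e (G e) - a e (P (G e)) := by
      simp [hd_def]
    rw [h3]
    have h4 : a e (P (G e)) = 0 := by
      have := horth (P (G e)) (hPmem (G e) (hGmem e))
      exact this
    rw [h4, sub_zero, hsymm e (G e), ← h2, real_inner_self_eq_norm_sq]
  -- Cauchy–Schwarz for the semidefinite form
  have hCS : (a e d) ^ 2 ≤ a e e * a d d := by
    have hq : ∀ t : ℝ, 0 ≤ a d d * (t * t) + (2 * a e d) * t + a e e := by
      intro t
      have hmem : e + t • d ∈ Vh := Vh.add_mem heVh (Vh.smul_mem t hdVh)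
      have hpp := hpos (e + t • d) hmem
      have expand : a (e + t • d) (e + t • d)
          = a d d * (t * t) + (2 * a e d) * t + a e e := by
        simp only [map_add, map_smul, LinearMap.add_apply, LinearMap.smul_apply,
          smul_eq_mul, hsymm d e]
        ring
      linarith [expand ▸ hpp]
    have hd2 : discrim (a d d) (2 * a e d) (a e e) ≤ 0 := discrim_le_zero hq
    unfold discrim at hd2
    nlinarith [hd2]
  have hdd : a d d ≤ Ca ^ 2 * ‖e‖ ^ 2 := hconv e
  have hee : 0 ≤ a e e := hpos e heVh
  by_cases hz : ‖e‖ = 0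
  · rw [hz]
    positivity
  · have hpos' : 0 < ‖e‖ ^ 2 := by
      have : 0 < ‖e‖ := lt_of_le_of_ne (norm_nonneg e) (Ne.symm hz)
      positivity
    have key : ‖e‖ ^ 2 ≤ Ca ^ 2 * a e e := by
      have h5 : (‖e‖ ^ 2) ^ 2 ≤ a e e * (Ca ^ 2 * ‖e‖ ^ 2) := by
        calc (‖e‖ ^ 2) ^ 2 = (a e d) ^ 2 := by rw [h1]
          _ ≤ a e e * a d d := hCS
          _ ≤ a e e * (Ca ^ 2 * ‖e‖ ^ 2) := by nlinarith
      nlinarith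
    have hfin : ‖e‖ = Real.sqrt (‖e‖ ^ 2) := (Real.sqrt_sq (norm_nonneg e)).symm
    rw [hfin]
    calc Real.sqrt (‖e‖ ^ 2) ≤ Real.sqrt (Ca ^ 2 * a e e) := Real.sqrt_le_sqrt key
      _ = Ca * Real.sqrt (a e e) := by
          rw [Real.sqrt_mul (by positivity), Real.sqrt_sq hCa]
end

section
/- Let E be a real Banach space, τ > 0, t ∈ ℝ, and let g : ℝ → E be twice continuously differentiable on [t − τ, t + τ]. Then ‖g(t)‖ ≤ (1/(2τ)) ∫_{t−τ}^{t+τ} ‖g(s)‖ ds + (τ/2) ∫_{t−τ}^{t+τ} ‖g''(s)‖ ds. -/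
open intervalIntegral MeasureTheory Set

open scoped Interval

/-!
Write `g s = g t + (s - t) • g' t + r s`. Averaging over the interval symmetric about `t` kills
the linear term, so `2τ • g t = ∫ g - ∫ r`. By the mean value inequality
`‖r s‖ ≤ |s - t| · sup ‖g' u - g' t‖`, and by the fundamental theorem of calculus that supremum
is at most `∫ ‖g''‖`; finally `∫ |s - t| ds = τ²`.
-/

theorem ContDiffOn.hasDerivWithinAt_derivWithin {𝕜 F : Type*} [NontriviallyNormedField 𝕜]
    [NormedAddCommGroup F] [NormedSpace 𝕜 F] {f : 𝕜 → F} {s : Set 𝕜} {x : 𝕜}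
    (hf : ContDiffOn 𝕜 2 f s) (hs : UniqueDiffOn 𝕜 s) (hx : x ∈ s) :
    HasDerivWithinAt (derivWithin f s) (iteratedDerivWithin 2 f s x) s x := by
  rw [iteratedDerivWithin_eq_iterate]
  exact ((hf.derivWithin hs (by norm_num)).differentiableOn one_ne_zero x hx).hasDerivWithinAt

section

variable {E : Type*} [NormedAddCommGroup E] [NormedSpace ℝ E]

theorem intervalIntegral.integral_sub_center_eq_zero (t τ : ℝ) :
    ∫ s in (t - τ)..(t + τ), (s - t) = 0 := by
  rw [intervalIntegral.integral_comp_sub_right (fun x => x), integral_id]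
  ring

theorem intervalIntegral.integral_abs_sub_center {τ : ℝ} (hτ : 0 ≤ τ) (t : ℝ) :
    ∫ s in (t - τ)..(t + τ), |s - t| = τ ^ 2 := by
  have hpos : ∫ x in (0 : ℝ)..τ, |x| = τ ^ 2 / 2 := by
    rw [integral_congr fun x hx => abs_of_nonneg (by rw [uIcc_of_le hτ] at hx; exact hx.1),
      integral_id]
    ring
  have hneg : ∫ x in -τ..0, |x| = τ ^ 2 / 2 := by
    rw [← hpos, ← neg_zero, ← integral_comp_neg, neg_zero]
    simp only [abs_neg]
  have hint : ∀ a b : ℝ, IntervalIntegrable (fun x : ℝ => |x|) volume a b :=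
    fun _ _ => continuous_abs.intervalIntegrable _ _
  rw [intervalIntegral.integral_comp_sub_right (fun x => |x|), sub_sub_cancel_left,
    add_sub_cancel_left, ← integral_add_adjacent_intervals (hint _ 0) (hint 0 _), hneg, hpos]
  ring

theorem norm_sub_le_integral_norm_deriv [CompleteSpace E] {f f' : ℝ → E} {a b x y : ℝ}
    (hf : ∀ u ∈ Icc a b, HasDerivWithinAt f (f' u) (Icc a b) u)
    (hf' : IntervalIntegrable f' volume a b) (hx : x ∈ Icc a b) (hy : y ∈ Icc a b) :
    ‖f y - f x‖ ≤ ∫ u in a..b, ‖f' u‖ := by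
  have hab : a ≤ b := hx.1.trans hx.2
  have hxy : uIcc x y ⊆ Icc a b := uIcc_subset_Icc hx hy
  have hftc : ∫ u in x..y, f' u = f y - f x := by
    refine integral_eq_sub_of_hasDeriv_right (HasDerivWithinAt.continuousOn fun u hu =>
      (hf u (hxy hu)).mono hxy) (fun u hu => ?_) (hf'.mono_set (by rwa [uIcc_of_le hab]))
    have hu' : u ∈ Ioo a b :=
      ⟨(le_min hx.1 hy.1).trans_lt hu.1, hu.2.trans_le (max_le hx.2 hy.2)⟩
    exact ((hf u (Ioo_subset_Icc_self hu')).hasDerivAt (Icc_mem_nhds hu'.1 hu'.2)).hasDerivWithinAt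
  rw [← hftc, integral_of_le hab]
  calc ‖∫ u in x..y, f' u‖ ≤ ∫ u in Ι x y, ‖f' u‖ := norm_integral_le_integral_norm_uIoc
    _ ≤ ∫ u in Ioc a b, ‖f' u‖ :=
      setIntegral_mono_set hf'.norm.1 (Filter.Eventually.of_forall fun _ => norm_nonneg _)
        (Ioc_subset_Ioc (le_min hx.1 hy.1) (max_le hx.2 hy.2)).eventuallyLE

theorem Convex.norm_sub_sub_smul_le_of_norm_deriv_sub_le {f f' : ℝ → E} {s : Set ℝ}
    {t x C : ℝ} (hs : Convex ℝ s) (hf : ∀ u ∈ s, HasDerivWithinAt f (f' u) s u)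
    (hC : ∀ u ∈ s, ‖f' u - f' t‖ ≤ C) (ht : t ∈ s) (hx : x ∈ s) :
    ‖f x - f t - (x - t) • f' t‖ ≤ C * |x - t| := by
  have hr : ∀ u ∈ s, HasDerivWithinAt (fun v => f v - (v - t) • f' t) (f' u - f' t) s u :=
    fun u hu => by
      simpa using (hf u hu).fun_sub (((hasDerivWithinAt_id u s).sub_const t).smul_const (f' t))
  simpa [Real.norm_eq_abs, sub_right_comm] using
    norm_image_sub_le_of_norm_hasDerivWithin_le hr hC hs ht hx

theorem two_mul_norm_le_integral_norm_add_of_norm_taylor_le [CompleteSpace E] {g : ℝ → E} {v : E}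
    {t τ C : ℝ}
    (hτ : 0 ≤ τ) (hg : IntervalIntegrable g volume (t - τ) (t + τ))
    (h : ∀ s ∈ Icc (t - τ) (t + τ), ‖g s - g t - (s - t) • v‖ ≤ C * |s - t|) :
    2 * τ * ‖g t‖ ≤ (∫ s in (t - τ)..(t + τ), ‖g s‖) + C * τ ^ 2 := by
  have hlin : IntervalIntegrable (fun s => (s - t) • v) volume (t - τ) (t + τ) :=
    ((continuous_sub_right t).smul continuous_const).intervalIntegrable _ _
  have habs : IntervalIntegrable (fun s => C * |s - t|) volume (t - τ) (t + τ) :=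
    (continuous_const.mul (continuous_sub_right t).abs).intervalIntegrable _ _
  have havg : ∫ s in (t - τ)..(t + τ), (g t + (s - t) • v) = (2 * τ) • g t := by
    rw [integral_add intervalIntegrable_const hlin, intervalIntegral.integral_const,
      intervalIntegral.integral_smul_const, integral_sub_center_eq_zero, zero_smul, add_zero]
    ring_nf
  have hpt : ∀ s ∈ Icc (t - τ) (t + τ), ‖g t + (s - t) • v‖ ≤ ‖g s‖ + C * |s - t| :=
    fun s hs => calc
      ‖g t + (s - t) • v‖ = ‖g s - (g s - g t - (s - t) • v)‖ := by congr 1; abel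
      _ ≤ ‖g s‖ + C * |s - t| := (norm_sub_le _ _).trans (by gcongr; exact h s hs)
  calc 2 * τ * ‖g t‖ = ‖∫ s in (t - τ)..(t + τ), (g t + (s - t) • v)‖ := by
        rw [havg, norm_smul, Real.norm_of_nonneg (by positivity)]
    _ ≤ ∫ s in (t - τ)..(t + τ), (‖g s‖ + C * |s - t|) :=
        norm_integral_le_of_norm_le (by linarith) (Filter.Eventually.of_forall fun s hs =>
          hpt s (Ioc_subset_Icc_self hs)) (hg.norm.add habs)
    _ = (∫ s in (t - τ)..(t + τ), ‖g s‖) + C * τ ^ 2 := by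
        rw [integral_add hg.norm habs, intervalIntegral.integral_const_mul,
          integral_abs_sub_center hτ]

end

/-- Averaged Taylor estimate: if `g : ℝ → E` is twice continuously differentiable on
`[t − τ, t + τ]`, then
`‖g(t)‖ ≤ (1/(2τ)) ∫_{t−τ}^{t+τ} ‖g(s)‖ ds + (τ/2) ∫_{t−τ}^{t+τ} ‖g''(s)‖ ds`. -/
theorem averaged_taylor_estimate
    {E : Type*} [NormedAddCommGroup E] [NormedSpace ℝ E] [CompleteSpace E]
    (τ t : ℝ) (hτ : 0 < τ) (g : ℝ → E)
    (hg : ContDiffOn ℝ 2 g (Set.Icc (t - τ) (t + τ))) :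
    ‖g t‖ ≤ (1 / (2 * τ)) * ∫ s in (t - τ)..(t + τ), ‖g s‖
      + (τ / 2) * ∫ s in (t - τ)..(t + τ),
          ‖iteratedDerivWithin 2 g (Set.Icc (t - τ) (t + τ)) s‖ := by
  set I := Icc (t - τ) (t + τ)
  set C := ∫ s in (t - τ)..(t + τ), ‖iteratedDerivWithin 2 g I s‖
  have hI : UniqueDiffOn ℝ I := uniqueDiffOn_Icc (by linarith)
  have ht : t ∈ I := ⟨by linarith, by linarith⟩
  have hg' : ∀ u ∈ I, HasDerivWithinAt g (derivWithin g I u) I u := fun u hu =>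
    (hg.differentiableOn (by norm_num) u hu).hasDerivWithinAt
  have hosc : ∀ u ∈ I, ‖derivWithin g I u - derivWithin g I t‖ ≤ C := fun u hu =>
    norm_sub_le_integral_norm_deriv (fun v hv => hg.hasDerivWithinAt_derivWithin hI hv)
      ((hg.continuousOn_iteratedDerivWithin le_rfl hI).intervalIntegrable_of_Icc (by linarith))
      ht hu
  have hmain : 2 * τ * ‖g t‖ ≤ (∫ s in (t - τ)..(t + τ), ‖g s‖) + C * τ ^ 2 :=
    two_mul_norm_le_integral_norm_add_of_norm_taylor_le hτ.le
      (hg.continuousOn.intervalIntegrable_of_Icc (by linarith))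
      fun s hs => (convex_Icc _ _).norm_sub_sub_smul_le_of_norm_deriv_sub_le hg' hosc ht hs
  -- `∫ s in a..b, ‖g s‖ + (τ / 2) * C` parses with the constant `(τ / 2) * C` inside the integrand
  rw [integral_add (hg.continuousOn.norm.intervalIntegrable_of_Icc (by linarith))
      intervalIntegrable_const, intervalIntegral.integral_const, smul_eq_mul,
    div_mul_eq_mul_div, one_mul, le_div_iff₀ (by positivity)]
  linarith
end

section
/- Suppose the sequence (v^n)_{n≥0} solves the discrete wave scheme with source (r^n)_{n≥1}. Define Δ^0 := 0 and Δ^n := τ Σ_{k=1}^{n} v^k for n ≥ 1. Then for every n ≥ 1 the summed error identity holds: ‖π v^{n+1}‖² + a(Δ^n, Δ^{n+1}) − ‖π v^1‖² = Σ_{k=1}^{n} ( b(v^1 − v^0, v^{k+1} + v^k) + τ² Σ_{s=1}^{k} ⟨r^s, v^{k+1} + v^k⟩ ). -/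
open RealInnerProductSpace Finset

/-!
Test the scheme at level `s` with `w = v^{m+1} + v^m` and sum over `s = 1, …, m`: the second
differences telescope to `(v^{m+1} − v^m) − (v^1 − v^0)`, and the `a`-terms add up to
`a(Δ^m, w) / τ`. By symmetry, `b(v^{m+1} − v^m, v^{m+1} + v^m) = b(v^{m+1}, v^{m+1}) − b(v^m, v^m)`
and, since `Δ^{m+1} − Δ^{m−1} = τ w`, `τ a(Δ^m, w) = a(Δ^m, Δ^{m+1}) − a(Δ^{m−1}, Δ^m)`. So the
tested, summed scheme is exactly the increment of the energy `b(v^{m+1}, v^{m+1}) + a(Δ^m, Δ^{m+1})`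
from `m − 1` to `m`, and summing these increments over `m = 1, …, n` gives the identity.
-/

theorem Finset.sum_Icc_sub_pred {G : Type*} [AddCommGroup G] (f : ℕ → G) (n : ℕ) :
    ∑ k ∈ Icc 1 n, (f k - f (k - 1)) = f n - f 0 := by
  induction n with
  | zero => simp
  | succ n ih =>
    rw [sum_Icc_succ_top (by omega), ih, Nat.add_sub_cancel]
    abel

theorem Finset.sum_Icc_second_difference {G : Type*} [AddCommGroup G] (v : ℕ → G) (n : ℕ) :
    ∑ k ∈ Icc 1 n, (v (k + 1) - 2 • v k + v (k - 1)) = (v (n + 1) - v n) - (v 1 - v 0) := by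
  rw [← sum_Icc_sub_pred (fun k => v (k + 1) - v k)]
  refine sum_congr rfl fun k hk => ?_
  rw [Nat.sub_add_cancel (mem_Icc.1 hk).1]
  abel

theorem LinearMap.apply_sub_add_of_symm {R M : Type*} [CommRing R] [AddCommGroup M] [Module R M]
    (b : M →ₗ[R] M →ₗ[R] R) (hb : ∀ x y, b x y = b y x) (x y : M) :
    b (x - y) (x + y) = b x x - b y y := by
  simp only [map_sub, map_add, LinearMap.sub_apply, hb y x]
  ring

namespace DiscreteWave

variable {M : Type*} [AddCommGroup M] [Module ℝ M]

def integral (τ : ℝ) (v : ℕ → M) (n : ℕ) : M := τ • ∑ k ∈ Icc 1 n, v k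

@[simp]
theorem integral_zero (τ : ℝ) (v : ℕ → M) : integral τ v 0 = 0 := by
  simp [integral]

theorem integral_succ_sub_pred (τ : ℝ) (v : ℕ → M) {n : ℕ} (hn : 1 ≤ n) :
    integral τ v (n + 1) - integral τ v (n - 1) = τ • (v (n + 1) + v n) := by
  obtain ⟨m, rfl⟩ : ∃ m, n = m + 1 := ⟨n - 1, by omega⟩
  simp only [integral, Nat.add_sub_cancel, ← smul_sub]
  rw [sum_Icc_succ_top (by omega : 1 ≤ m + 2), sum_Icc_succ_top (by omega : 1 ≤ m + 1)]
  abel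

variable (a b : M →ₗ[ℝ] M →ₗ[ℝ] ℝ) (τ : ℝ) (v : ℕ → M)

def energy (n : ℕ) : ℝ :=
  b (v (n + 1)) (v (n + 1)) + a (integral τ v n) (integral τ v (n + 1))

variable {a b τ v} (f : ℕ → M → ℝ) {V : Submodule ℝ M}
  (hscheme : ∀ n, 1 ≤ n → ∀ w ∈ V,
    b ((τ ^ 2)⁻¹ • (v (n + 1) - 2 • v n + v (n - 1))) w + a (v n) w = f n w)
include hscheme

theorem sum_scheme (hτ : τ ≠ 0) {w : M} (hw : w ∈ V) (m : ℕ) :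
    b (v (m + 1) - v m - (v 1 - v 0)) w + τ ^ 2 * a (∑ s ∈ Icc 1 m, v s) w
      = τ ^ 2 * ∑ s ∈ Icc 1 m, f s w := by
  have hsum : ∑ s ∈ Icc 1 m, (b ((τ ^ 2)⁻¹ • (v (s + 1) - 2 • v s + v (s - 1))) w + a (v s) w)
      = ∑ s ∈ Icc 1 m, f s w :=
    sum_congr rfl fun s hs => hscheme s (mem_Icc.1 hs).1 w hw
  rw [sum_add_distrib, ← LinearMap.sum_apply, ← map_sum, ← smul_sum,
    sum_Icc_second_difference, ← LinearMap.sum_apply, ← map_sum, map_smul,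
    LinearMap.smul_apply, smul_eq_mul] at hsum
  rw [← hsum, mul_add, ← mul_assoc, mul_inv_cancel₀ (pow_ne_zero 2 hτ), one_mul]

theorem energy_sub_energy_pred (ha : ∀ x y, a x y = a y x) (hb : ∀ x y, b x y = b y x)
    (hτ : τ ≠ 0) (hvV : ∀ n, v n ∈ V) {m : ℕ} (hm : 1 ≤ m) :
    energy a b τ v m - energy a b τ v (m - 1)
      = b (v 1 - v 0) (v (m + 1) + v m)
        + τ ^ 2 * ∑ s ∈ Icc 1 m, f s (v (m + 1) + v m) := by
  have hb_step : b (v (m + 1)) (v (m + 1)) - b (v m) (v m)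
      = b (v (m + 1) - v m) (v (m + 1) + v m) :=
    (b.apply_sub_add_of_symm hb _ _).symm
  have ha_step : a (integral τ v m) (integral τ v (m + 1))
        - a (integral τ v (m - 1)) (integral τ v m)
      = τ ^ 2 * a (∑ s ∈ Icc 1 m, v s) (v (m + 1) + v m) := by
    rw [ha (integral τ v (m - 1)), ← map_sub, integral_succ_sub_pred τ v hm]
    simp only [integral, map_smul, LinearMap.smul_apply, smul_eq_mul]
    ring
  have hscheme_m := sum_scheme f hscheme hτ (V.add_mem (hvV (m + 1)) (hvV m)) m
  rw [map_sub, LinearMap.sub_apply] at hscheme_m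
  simp only [energy, Nat.sub_add_cancel hm]
  linear_combination hb_step + ha_step + hscheme_m

theorem energy_identity (ha : ∀ x y, a x y = a y x) (hb : ∀ x y, b x y = b y x)
    (hτ : τ ≠ 0) (hvV : ∀ n, v n ∈ V) (n : ℕ) :
    b (v (n + 1)) (v (n + 1)) + a (integral τ v n) (integral τ v (n + 1)) - b (v 1) (v 1)
      = ∑ k ∈ Icc 1 n,
          (b (v 1 - v 0) (v (k + 1) + v k) + τ ^ 2 * ∑ s ∈ Icc 1 k, f s (v (k + 1) + v k)) := by
  have henergy_zero : energy a b τ v 0 = b (v 1) (v 1) := by simp [energy]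
  rw [← henergy_zero, ← energy, ← sum_Icc_sub_pred]
  exact sum_congr rfl fun k hk =>
    energy_sub_energy_pred f hscheme ha hb hτ hvV (mem_Icc.1 hk).1

end DiscreteWave

theorem summed_error_identity_general
    {H : Type*} [NormedAddCommGroup H] [InnerProductSpace ℝ H]
    (W V : Submodule ℝ H) [W.HasOrthogonalProjection]
    (a : H →ₗ[ℝ] H →ₗ[ℝ] ℝ) (hsymm : ∀ u w : H, a u w = a w u)
    (τ : ℝ) (hτ : 0 < τ)
    (v r : ℕ → H) (hvV : ∀ n, v n ∈ V)
    (hscheme : ∀ n, 1 ≤ n → ∀ w ∈ V,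
      ⟪(W.orthogonalProjectionOnto ((τ ^ 2)⁻¹ • (v (n + 1) - 2 • v n + v (n - 1))) : H),
        (W.orthogonalProjectionOnto w : H)⟫ + a (v n) w = ⟪r n, w⟫)
    (n : ℕ) :
    ‖(W.orthogonalProjectionOnto (v (n + 1)) : H)‖ ^ 2
      + a (τ • ∑ k ∈ Finset.Icc 1 n, v k) (τ • ∑ k ∈ Finset.Icc 1 (n + 1), v k)
      - ‖(W.orthogonalProjectionOnto (v 1) : H)‖ ^ 2
    = ∑ k ∈ Finset.Icc 1 n,
        (⟪(W.orthogonalProjectionOnto (v 1 - v 0) : H),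
            (W.orthogonalProjectionOnto (v (k + 1) + v k) : H)⟫
          + τ ^ 2 * ∑ s ∈ Finset.Icc 1 k, ⟪r s, v (k + 1) + v k⟫) := by
  let P : H →ₗ[ℝ] H := W.starProjection
  let b : H →ₗ[ℝ] H →ₗ[ℝ] ℝ := (innerₗ H).compl₁₂ P P
  have hb : ∀ x y, b x y = b y x := fun x y => real_inner_comm _ _
  rw [← real_inner_self_eq_norm_sq, ← real_inner_self_eq_norm_sq]
  exact DiscreteWave.energy_identity (fun n w => ⟪r n, w⟫) (V := V) hscheme hsymm hb hτ.ne' hvV n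

/-- Summed error identity for the discrete wave scheme: with `Δ^n = τ Σ_{k=1}^n v^k`,
`‖π v^{n+1}‖² + a(Δ^n, Δ^{n+1}) − ‖π v^1‖²
  = Σ_{k=1}^n ( b(v^1 − v^0, v^{k+1} + v^k) + τ² Σ_{s=1}^k ⟨r^s, v^{k+1} + v^k⟩ )`. -/
theorem summed_error_identity
    {H : Type*} [NormedAddCommGroup H] [InnerProductSpace ℝ H]
    (W V : Submodule ℝ H) [W.HasOrthogonalProjection]
    (a : H →ₗ[ℝ] H →ₗ[ℝ] ℝ) (hsymm : ∀ u w : H, a u w = a w u)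
    (τ : ℝ) (hτ : 0 < τ)
    (v r : ℕ → H) (hvV : ∀ n, v n ∈ V)
    (hscheme : ∀ n, 1 ≤ n → ∀ w ∈ V,
      ⟪(W.orthogonalProjectionOnto ((τ ^ 2)⁻¹ • (v (n + 1) - 2 • v n + v (n - 1))) : H),
        (W.orthogonalProjectionOnto w : H)⟫ + a (v n) w = ⟪r n, w⟫)
    (n : ℕ) (hn : 1 ≤ n) :
    ‖(W.orthogonalProjectionOnto (v (n + 1)) : H)‖ ^ 2
      + a (τ • ∑ k ∈ Finset.Icc 1 n, v k) (τ • ∑ k ∈ Finset.Icc 1 (n + 1), v k)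
      - ‖(W.orthogonalProjectionOnto (v 1) : H)‖ ^ 2
    = ∑ k ∈ Finset.Icc 1 n,
        (⟪(W.orthogonalProjectionOnto (v 1 - v 0) : H),
            (W.orthogonalProjectionOnto (v (k + 1) + v k) : H)⟫
          + τ ^ 2 * ∑ s ∈ Finset.Icc 1 k, ⟪r s, v (k + 1) + v k⟫) :=
  summed_error_identity_general W V a hsymm τ hτ v r hvV hscheme n
end
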